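/- arXiv:2505.04536 — 4 statements merged into one kernel-verified Lean document; each statement's English description precedes it below -/
import Mathlib

section
/- For every weighted tree T on n vertices with total edge weight L, there exists a 1-spanner of the tree metric of T with hop-diameter 2 and total edge weight at most n·L. -/
/-- The weight of a walk in a graph with edge weights `w`. -/
noncomputable def walkWeight {V : Type*} {G : SimpleGraph V} (w : Sym2 V → ℝ)
    {u v : V} (p : G.Walk u v) : ℝ :=
  (p.darts.map (fun d => w s(d.toProd.1, d.toProd.2))).sum

/-- The unique path between two vertices of a tree. -/
noncomputable def treePath {V : Type*} {G : SimpleGraph V} (hG : G.IsTree) (u v : V) :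
    G.Walk u v :=
  (hG.existsUnique_path u v).exists.choose

/-- Distance in a weighted tree: the weight of the unique path. -/
noncomputable def treeDist {V : Type*} {G : SimpleGraph V} (hG : G.IsTree)
    (w : Sym2 V → ℝ) (u v : V) : ℝ :=
  walkWeight w (treePath hG u v)

/-- Total weight of a graph with edge weights `w`. -/
noncomputable def treeWeight {V : Type*} [Fintype V] (G : SimpleGraph V)
    (w : Sym2 V → ℝ) : ℝ := by
  classical exact ∑ e : Sym2 V, if e ∈ G.edgeSet then w e else 0

/-- Weight of a path (given as a list of vertices) with respect to a distance function. -/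
def pathWeightD {V : Type*} (d : V → V → ℝ) (l : List V) : ℝ :=
  ((l.zip l.tail).map (fun p => d p.1 p.2)).sum

/-- All consecutive pairs of the list are edges of `H` (in either orientation). -/
def ChainIn {V : Type*} (H : Finset (V × V)) (l : List V) : Prop :=
  l.Chain' (fun a b => (a, b) ∈ H ∨ (b, a) ∈ H)

/-- `H` is a `1`-spanner with hop-diameter `k` of the tree metric of `(G, w)`:
every pair of vertices is joined by a path in `H` of at most `k` edges whose
total weight equals their tree distance. -/
def IsKHopTreeSpanner {V : Type*} {G : SimpleGraph V} (hG : G.IsTree)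
    (w : Sym2 V → ℝ) (k : ℕ) (H : Finset (V × V)) : Prop :=
  ∀ u v : V, ∃ l : List V, l.head? = some u ∧ l.getLast? = some v ∧
    l.length ≤ k + 1 ∧ ChainIn H l ∧
    pathWeightD (treeDist hG w) l = treeDist hG w u v

/-- Total weight of a spanner whose edges are weighted by tree distance. -/
noncomputable def spannerWeight {V : Type*} {G : SimpleGraph V} (hG : G.IsTree)
    (w : Sym2 V → ℝ) (H : Finset (V × V)) : ℝ :=
  ∑ e ∈ H, treeDist hG w e.1 e.2

/-!
Centroid decomposition. A vertex `c` of a subtree `S` minimising the sum of hop distances to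
the vertices of `S` is a centroid: every branch of `S` at `c` (a component of `S \ {c}`) has at
most `|S| / 2` vertices, since otherwise moving `c` one step into the large branch would lower
that sum. Join every vertex of `S` to `c` and recurse into the branches. A pair of vertices in
different branches is then joined through `c` with two hops, and a pair in one branch is handled
by the recursion. For the weight, a vertex `v` of the branch `C` contributes `d(v, c)` to the
star and this is at most the weight of the subtree `C ∪ {c}`; the recursion on `C` costs at most
`|C|` times the same weight. So this level costs at most `2 ∑_C |C| w(C ∪ {c}) ≤ |S| w(S)`,
because the subtrees `C ∪ {c}` share no edge.
-/

namespace SimpleGraph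

variable {V : Type*} {G : SimpleGraph V} {w : Sym2 V → ℝ}

open Classical in
noncomputable def inducedWeight (G : SimpleGraph V) (w : Sym2 V → ℝ) (S : Finset V) : ℝ :=
  ∑ e ∈ S.sym2 with e ∈ G.edgeSet, w e

lemma mem_filter_sym2_edgeSet [DecidablePred (· ∈ G.edgeSet)] {S : Finset V} {e : Sym2 V} :
    e ∈ ({e ∈ S.sym2 | e ∈ G.edgeSet} : Finset (Sym2 V)) ↔ e ∈ G.edgeSet ∧ ∀ x ∈ e, x ∈ S := by
  rw [Finset.mem_filter, Finset.mem_sym2_iff, and_comm]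

lemma inducedWeight_nonneg (hw : ∀ e, 0 ≤ w e) (S : Finset V) : 0 ≤ inducedWeight G w S :=
  Finset.sum_nonneg fun e _ => hw e

lemma inducedWeight_mono (hw : ∀ e, 0 ≤ w e) {S T : Finset V} (h : S ⊆ T) :
    inducedWeight G w S ≤ inducedWeight G w T := by
  classical
  refine Finset.sum_le_sum_of_subset_of_nonneg (fun e he => ?_) fun e _ _ => hw e
  rw [mem_filter_sym2_edgeSet] at he ⊢
  exact ⟨he.1, fun x hx => h (he.2 x hx)⟩

/-- Subtrees that pairwise meet only in `c` share no edge. -/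
lemma sum_inducedWeight_insert_le [DecidableEq V] (hw : ∀ e, 0 ≤ w e) {c : V} {S : Finset V}
    {K : Finset (Finset V)} (hK : (K : Set (Finset V)).PairwiseDisjoint id)
    (hKS : ∀ C ∈ K, insert c C ⊆ S) :
    ∑ C ∈ K, inducedWeight G w (insert c C) ≤ inducedWeight G w S := by
  classical
  have hdisj : (K : Set (Finset V)).PairwiseDisjoint
      fun C => ({e ∈ (insert c C).sym2 | e ∈ G.edgeSet} : Finset (Sym2 V)) := by
    intro C₁ h₁ C₂ h₂ hne
    refine Finset.disjoint_left.2 fun e he₁ he₂ => ?_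
    rw [mem_filter_sym2_edgeSet] at he₁ he₂
    have hc : ∀ x ∈ e, x = c := fun x hx => by
      have := Finset.disjoint_left.1 (hK h₁ h₂ hne)
      grind
    induction e using Sym2.ind with
    | _ a b =>
      exact G.loopless.irrefl a <| by
        simpa [hc a (Sym2.mem_mk_left a b), hc b (Sym2.mem_mk_right a b)] using he₁.1
  unfold inducedWeight
  rw [← Finset.sum_biUnion hdisj]
  refine Finset.sum_le_sum_of_subset_of_nonneg (fun e he => ?_) fun e _ _ => hw e
  obtain ⟨C, hC, he⟩ := Finset.mem_biUnion.1 he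
  rw [mem_filter_sym2_edgeSet] at he ⊢
  exact ⟨he.1, fun x hx => hKS C hC (he.2 x hx)⟩

lemma treeWeight_eq_inducedWeight_univ [Fintype V] :
    treeWeight G w = inducedWeight G w Finset.univ := by
  classical
  simp [treeWeight, inducedWeight, Finset.sum_filter]

end SimpleGraph

namespace SimpleGraph.IsTree

variable {V : Type*} {G : SimpleGraph V} (hG : G.IsTree) (w : Sym2 V → ℝ)

section TreePath

lemma isPath_treePath (u v : V) : (treePath hG u v).IsPath :=
  (hG.existsUnique_path u v).exists.choose_spec

lemma treePath_eq_of_isPath {u v : V} {p : G.Walk u v} (hp : p.IsPath) : treePath hG u v = p :=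
  (hG.existsUnique_path u v).unique (isPath_treePath hG u v) hp

lemma treePath_self (u : V) : treePath hG u u = Walk.nil :=
  treePath_eq_of_isPath hG Walk.IsPath.nil

lemma reverse_treePath (u v : V) : (treePath hG u v).reverse = treePath hG v u :=
  (treePath_eq_of_isPath hG (isPath_treePath hG u v).reverse).symm

lemma mem_support_treePath_comm {u v x : V} :
    x ∈ (treePath hG u v).support ↔ x ∈ (treePath hG v u).support := by
  rw [← reverse_treePath hG u v, Walk.support_reverse, List.mem_reverse]

lemma walkWeight_eq_sum_edges {u v : V} (p : G.Walk u v) :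
    walkWeight w p = (p.edges.map w).sum := by
  simp only [walkWeight, Walk.edges, List.map_map]
  rfl

lemma treeDist_self (u : V) : treeDist hG w u u = 0 := by
  simp [treeDist, treePath_self, walkWeight]

lemma treeDist_nonneg (hw : ∀ e, 0 ≤ w e) (u v : V) : 0 ≤ treeDist hG w u v := by
  rw [treeDist, walkWeight_eq_sum_edges]
  exact List.sum_nonneg fun _ he => by
    obtain ⟨e, -, rfl⟩ := List.mem_map.1 he
    exact hw e

variable {w} in
lemma treeDist_le_inducedWeight (hw : ∀ e, 0 ≤ w e) {T : Finset V} {u v : V}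
    (hT : ∀ x ∈ (treePath hG u v).support, x ∈ T) : treeDist hG w u v ≤ inducedWeight G w T := by
  classical
  rw [treeDist, walkWeight_eq_sum_edges,
    ← List.sum_toFinset w (isPath_treePath hG u v).isTrail.edges_nodup]
  refine Finset.sum_le_sum_of_subset_of_nonneg (fun e he => ?_) fun e _ _ => hw e
  rw [List.mem_toFinset] at he
  rw [mem_filter_sym2_edgeSet]
  exact ⟨Walk.edges_subset_edgeSet _ he, fun x hx => hT x (Walk.mem_support_of_mem_edges he hx)⟩

lemma length_treePath_le {u v : V} (p : G.Walk u v) : (treePath hG u v).length ≤ p.length := by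
  classical
  rw [treePath_eq_of_isPath hG p.bypass_isPath]
  exact p.length_bypass_le_length

lemma mem_support_treePath_or {u v x m : V} (hm : m ∈ (treePath hG u x).support) :
    m ∈ (treePath hG u v).support ∨ m ∈ (treePath hG v x).support := by
  classical
  rw [treePath_eq_of_isPath hG ((treePath hG u v).append (treePath hG v x)).bypass_isPath] at hm
  have := Walk.support_bypass_subset_support _ hm
  rw [Walk.support_append, List.mem_append] at this
  exact this.imp_right List.mem_of_mem_tail

lemma length_treePath_le_succ_of_adj {a b : V} (hab : G.Adj a b) (v : V) :
    (treePath hG b v).length ≤ (treePath hG a v).length + 1 := by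
  simpa using length_treePath_le hG (Walk.cons hab.symm (treePath hG a v))

lemma length_treePath_eq_succ_of_adj {a b v : V} (hab : G.Adj a b)
    (ha : a ∉ (treePath hG b v).support) :
    (treePath hG a v).length = (treePath hG b v).length + 1 := by
  rw [treePath_eq_of_isPath hG ((Walk.cons_isPath_iff hab _).2 ⟨isPath_treePath hG b v, ha⟩),
    Walk.length_cons]

lemma exists_adj_notMem_support_treePath {c u : V} (hcu : c ≠ u) :
    ∃ c', G.Adj c c' ∧ c' ∈ (treePath hG c u).support ∧ c ∉ (treePath hG c' u).support := by
  obtain ⟨c', hadj, q, hq⟩ := Walk.not_nil_iff.1 (Walk.not_nil_of_ne (p := treePath hG c u) hcu)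
  have hpath := isPath_treePath hG c u
  rw [hq, Walk.cons_isPath_iff] at hpath
  refine ⟨c', hadj, ?_, ?_⟩
  · rw [hq, Walk.support_cons]
    exact List.mem_cons_of_mem _ q.start_mem_support
  · rw [treePath_eq_of_isPath hG hpath.1]
    exact hpath.2

variable {hG} in
lemma notMem_support_treePath_symm {c u v : V} (h : c ∉ (treePath hG u v).support) :
    c ∉ (treePath hG v u).support :=
  (mem_support_treePath_comm hG).not.1 h

variable {hG} in
lemma notMem_support_treePath_trans {c u v x : V} (h₁ : c ∉ (treePath hG u v).support)
    (h₂ : c ∉ (treePath hG v x).support) : c ∉ (treePath hG u x).support :=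
  fun h => (mem_support_treePath_or hG h).elim h₁ h₂

variable [DecidableEq V]

lemma takeUntil_treePath {u v m : V} (h : m ∈ (treePath hG u v).support) :
    (treePath hG u v).takeUntil m h = treePath hG u m :=
  (treePath_eq_of_isPath hG ((isPath_treePath hG u v).takeUntil h)).symm

lemma dropUntil_treePath {u v m : V} (h : m ∈ (treePath hG u v).support) :
    (treePath hG u v).dropUntil m h = treePath hG m v :=
  (treePath_eq_of_isPath hG ((isPath_treePath hG u v).dropUntil h)).symm

lemma treePath_append_of_mem {u v m : V} (h : m ∈ (treePath hG u v).support) :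
    (treePath hG u m).append (treePath hG m v) = treePath hG u v := by
  rw [← takeUntil_treePath hG h, ← dropUntil_treePath hG h, Walk.take_spec]

lemma treeDist_add_of_mem {u v m : V} (h : m ∈ (treePath hG u v).support) :
    treeDist hG w u m + treeDist hG w m v = treeDist hG w u v := by
  simp only [treeDist, walkWeight_eq_sum_edges, ← treePath_append_of_mem hG h, Walk.edges_append,
    List.map_append, List.sum_append]

lemma length_treePath_add_of_mem {u v m : V} (h : m ∈ (treePath hG u v).support) :
    (treePath hG u m).length + (treePath hG m v).length = (treePath hG u v).length := by
  rw [← Walk.length_append, treePath_append_of_mem hG h]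

lemma support_treePath_subset_of_mem {u v m : V} (h : m ∈ (treePath hG u v).support) :
    (treePath hG u m).support ⊆ (treePath hG u v).support := by
  rw [← takeUntil_treePath hG h]
  exact Walk.support_takeUntil_subset_support _ h

lemma eq_of_mem_support_treePath {u x y : V} (hx : x ∈ (treePath hG u y).support)
    (hy : y ∈ (treePath hG u x).support) : x = y := by
  have h₁ := length_treePath_add_of_mem hG hx
  have h₂ := length_treePath_add_of_mem hG hy
  exact Walk.eq_of_length_eq_zero (p := treePath hG x y) (by omega)

end TreePath

section Branch

/-- `S` is the vertex set of a subtree. -/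
def IsTreeConvex (S : Finset V) : Prop :=
  ∀ u ∈ S, ∀ v ∈ S, ∀ x ∈ (treePath hG u v).support, x ∈ S

variable [DecidableEq V]

/-- The component of `S \ {c}` containing `u`. -/
noncomputable def branch (c u : V) (S : Finset V) : Finset V :=
  {v ∈ S.erase c | c ∉ (treePath hG u v).support}

noncomputable def branches (c : V) (S : Finset V) : Finset (Finset V) :=
  (S.erase c).image (branch hG c · S)

variable {hG}

lemma mem_branch {c u v : V} {S : Finset V} :
    v ∈ branch hG c u S ↔ v ∈ S.erase c ∧ c ∉ (treePath hG u v).support :=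
  Finset.mem_filter

lemma branch_subset_erase {c u : V} {S : Finset V} : branch hG c u S ⊆ S.erase c :=
  Finset.filter_subset _ _

lemma mem_branch_self {c u : V} {S : Finset V} (hu : u ∈ S.erase c) : u ∈ branch hG c u S := by
  refine mem_branch.2 ⟨hu, ?_⟩
  rw [treePath_self, Walk.support_nil, List.mem_singleton]
  exact (Finset.ne_of_mem_erase hu).symm

lemma branch_eq_of_mem {c u v : V} {S : Finset V} (hv : v ∈ branch hG c u S) :
    branch hG c v S = branch hG c u S := by
  have hvu := notMem_support_treePath_symm (mem_branch.1 hv).2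
  ext x
  simp only [mem_branch]
  exact and_congr_right fun _ =>
    ⟨notMem_support_treePath_trans (mem_branch.1 hv).2, notMem_support_treePath_trans hvu⟩

lemma mem_branches {c : V} {S C : Finset V} :
    C ∈ branches hG c S ↔ ∃ u ∈ S.erase c, branch hG c u S = C :=
  Finset.mem_image

lemma pairwiseDisjoint_branches (c : V) (S : Finset V) :
    (branches hG c S : Set (Finset V)).PairwiseDisjoint id := by
  intro C₁ h₁ C₂ h₂ hne
  obtain ⟨u₁, -, rfl⟩ := mem_branches.1 h₁
  obtain ⟨u₂, -, rfl⟩ := mem_branches.1 h₂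
  refine Finset.disjoint_left.2 fun v hv₁ hv₂ => hne ?_
  rw [← branch_eq_of_mem hv₁, branch_eq_of_mem hv₂]

lemma biUnion_branches (c : V) (S : Finset V) : (branches hG c S).biUnion id = S.erase c := by
  ext v
  simp only [Finset.mem_biUnion, mem_branches, id]
  constructor
  · rintro ⟨_, ⟨u, -, rfl⟩, hv⟩
    exact branch_subset_erase hv
  · exact fun hv => ⟨_, ⟨v, hv, rfl⟩, mem_branch_self hv⟩

lemma isTreeConvex_branch {S : Finset V} (hS : IsTreeConvex hG S) (c u : V) :
    IsTreeConvex hG (branch hG c u S) := by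
  intro x hx y hy m hm
  obtain ⟨hxS, hux⟩ := mem_branch.1 hx
  have hxy := notMem_support_treePath_trans (notMem_support_treePath_symm hux)
    (mem_branch.1 hy).2
  have hxm : c ∉ (treePath hG x m).support := fun h => hxy (support_treePath_subset_of_mem hG hm h)
  have hmc : m ≠ c := by
    rintro rfl
    exact hxm (Walk.end_mem_support _)
  refine mem_branch.2 ⟨Finset.mem_erase.2 ⟨hmc, ?_⟩, notMem_support_treePath_trans hux hxm⟩
  exact hS x (Finset.mem_of_mem_erase hxS) y (Finset.mem_of_mem_erase (mem_branch.1 hy).1) m hm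

lemma IsTreeConvex.mem_insert_branch {S : Finset V} (hS : IsTreeConvex hG S) {c u v x : V}
    (hc : c ∈ S) (hv : v ∈ branch hG c u S) (hx : x ∈ (treePath hG v c).support) :
    x ∈ insert c (branch hG c u S) := by
  obtain ⟨hvS, huv⟩ := mem_branch.1 hv
  rcases eq_or_ne x c with rfl | hxc
  · exact Finset.mem_insert_self _ _
  have hvx : c ∉ (treePath hG v x).support := fun h => hxc (eq_of_mem_support_treePath hG hx h)
  exact Finset.mem_insert_of_mem <| mem_branch.2
    ⟨Finset.mem_erase.2 ⟨hxc, hS v (Finset.mem_of_mem_erase hvS) c hc x hx⟩,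
      notMem_support_treePath_trans huv hvx⟩

lemma exists_two_mul_card_branch_le {S : Finset V} (hS : IsTreeConvex hG S) (hne : S.Nonempty) :
    ∃ c ∈ S, ∀ C ∈ branches hG c S, 2 * C.card ≤ S.card := by
  obtain ⟨c, hcS, hmin⟩ := S.exists_min_image (fun c => ∑ v ∈ S, (treePath hG c v).length) hne
  refine ⟨c, hcS, fun C hC => ?_⟩
  obtain ⟨u, hu, rfl⟩ := mem_branches.1 hC
  have hCS : branch hG c u S ⊆ S := branch_subset_erase.trans (Finset.erase_subset c S)
  obtain ⟨c', hadj, hc'u, hcc'⟩ := exists_adj_notMem_support_treePath hG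
    (Finset.ne_of_mem_erase hu).symm
  have hc'S : c' ∈ S := hS c hcS u (Finset.mem_of_mem_erase hu) c' hc'u
  -- moving from `c` to `c'` brings the branch one step closer and everything else at most one
  -- step further away
  have hstep : ∀ v ∈ S, (treePath hG c' v).length + (if v ∈ branch hG c u S then 2 else 0)
      ≤ (treePath hG c v).length + 1 := by
    intro v _
    split_ifs with hv
    · have hc'v := notMem_support_treePath_trans hcc' (mem_branch.1 hv).2
      rw [length_treePath_eq_succ_of_adj hG hadj hc'v]
    · exact (length_treePath_le_succ_of_adj hG hadj v).trans (by omega)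
  have hsum := Finset.sum_le_sum hstep
  rw [Finset.sum_add_distrib, Finset.sum_add_distrib, Finset.sum_ite_mem,
    Finset.inter_eq_right.2 hCS] at hsum
  simp only [Finset.sum_const, smul_eq_mul, mul_one] at hsum
  have := hmin c' hc'S
  omega

end Branch

section Spanner

def HopJoined (k : ℕ) (H : Finset (V × V)) (u v : V) : Prop :=
  ∃ l : List V, l.head? = some u ∧ l.getLast? = some v ∧ l.length ≤ k + 1 ∧ ChainIn H l ∧
    pathWeightD (treeDist hG w) l = treeDist hG w u v

variable {hG w}

lemma HopJoined.mono {k : ℕ} {H H' : Finset (V × V)} (hH : H ⊆ H') {u v : V}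
    (h : HopJoined hG w k H u v) : HopJoined hG w k H' u v := by
  obtain ⟨l, hu, hv, hk, hl, hd⟩ := h
  exact ⟨l, hu, hv, hk, hl.imp fun _ _ => Or.imp (@hH _) (@hH _), hd⟩

lemma hopJoined_two_of_mem_support {H : Finset (V × V)} {u v c : V} (huc : (u, c) ∈ H)
    (hvc : (v, c) ∈ H) (hc : c ∈ (treePath hG u v).support) : HopJoined hG w 2 H u v := by
  classical
  refine ⟨[u, c, v], rfl, rfl, le_rfl, ?_, ?_⟩
  · exact .cons_cons (.inl huc) (.cons_cons (.inr hvc) (.singleton v))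
  · simp [pathWeightD, ← treeDist_add_of_mem hG w hc]

lemma spannerWeight_union_le [DecidableEq V] (hw : ∀ e, 0 ≤ w e) (A B : Finset (V × V)) :
    spannerWeight hG w (A ∪ B) ≤ spannerWeight hG w A + spannerWeight hG w B := by
  rw [spannerWeight, spannerWeight, spannerWeight, ← Finset.sum_union_inter]
  exact le_add_of_nonneg_right (Finset.sum_nonneg fun e _ => treeDist_nonneg hG w hw _ _)

lemma spannerWeight_biUnion_le [DecidableEq V] (hw : ∀ e, 0 ≤ w e) {ι : Type*} (K : Finset ι)
    (f : ι → Finset (V × V)) :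
    spannerWeight hG w (K.biUnion f) ≤ ∑ i ∈ K, spannerWeight hG w (f i) := by
  rw [← Finset.sup_eq_biUnion]
  exact K.apply_sup_le_sum (by simp [spannerWeight]) (spannerWeight_union_le hw _ _)

variable [DecidableEq V]

lemma spannerWeight_star_le (hw : ∀ e, 0 ≤ w e) {S : Finset V} (hS : IsTreeConvex hG S) {c : V}
    (hc : c ∈ S) :
    spannerWeight hG w (S.image (·, c)) ≤
      ∑ C ∈ branches hG c S, C.card * inducedWeight G w (insert c C) := by
  have hstar : spannerWeight hG w (S.image (·, c)) = ∑ v ∈ S.erase c, treeDist hG w v c := by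
    rw [spannerWeight, Finset.sum_image fun _ _ _ _ h => (Prod.ext_iff.1 h).1]
    exact (Finset.sum_erase (f := (treeDist hG w · c)) S (treeDist_self hG w c)).symm
  rw [hstar, ← biUnion_branches, Finset.sum_biUnion (pairwiseDisjoint_branches c S)]
  refine Finset.sum_le_sum fun C hC => ?_
  obtain ⟨u, -, rfl⟩ := mem_branches.1 hC
  rw [← nsmul_eq_mul]
  exact Finset.sum_le_card_nsmul _ _ _ fun v hv =>
    treeDist_le_inducedWeight hG hw fun x hx => hS.mem_insert_branch hc hv hx

lemma two_mul_sum_card_mul_inducedWeight_le (hw : ∀ e, 0 ≤ w e) {S : Finset V} {c : V}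
    (hc : c ∈ S)     (hcent : ∀ C ∈ branches hG c S, 2 * C.card ≤ S.card) :
    2 * ∑ C ∈ branches hG c S, C.card * inducedWeight G w (insert c C) ≤
      S.card * inducedWeight G w S := by
  have hsub : ∀ C ∈ branches hG c S, insert c C ⊆ S := fun C hC => by
    obtain ⟨u, -, rfl⟩ := mem_branches.1 hC
    exact Finset.insert_subset hc (branch_subset_erase.trans (Finset.erase_subset c S))
  calc 2 * ∑ C ∈ branches hG c S, C.card * inducedWeight G w (insert c C)
      ≤ ∑ C ∈ branches hG c S, (S.card : ℝ) * inducedWeight G w (insert c C) := by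
        rw [Finset.mul_sum]
        refine Finset.sum_le_sum fun C hC => ?_
        rw [← mul_assoc]
        gcongr
        · exact inducedWeight_nonneg hw _
        · exact_mod_cast hcent C hC
    _ ≤ S.card * inducedWeight G w S := by
        rw [← Finset.mul_sum]
        gcongr
        exact sum_inducedWeight_insert_le hw (pairwiseDisjoint_branches c S) hsub

lemma hopJoined_two_star_union_biUnion {S : Finset V} {c : V} {f : Finset V → Finset (V × V)}
    (hf : ∀ C ∈ branches hG c S, ∀ u ∈ C, ∀ v ∈ C, HopJoined hG w 2 (f C) u v) :
    ∀ u ∈ S, ∀ v ∈ S, HopJoined hG w 2 (S.image (·, c) ∪ (branches hG c S).biUnion f) u v := by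
  intro u hu v hv
  by_cases huv : c ∈ (treePath hG u v).support
  · exact hopJoined_two_of_mem_support (Finset.mem_union_left _ (Finset.mem_image_of_mem _ hu))
      (Finset.mem_union_left _ (Finset.mem_image_of_mem _ hv)) huv
  have hu' : u ∈ S.erase c := Finset.mem_erase.2 ⟨fun h => huv (h ▸ Walk.start_mem_support _), hu⟩
  have hv' : v ∈ S.erase c := Finset.mem_erase.2 ⟨fun h => huv (h ▸ Walk.end_mem_support _), hv⟩
  have hC : branch hG c u S ∈ branches hG c S := mem_branches.2 ⟨u, hu', rfl⟩
  exact (hf _ hC u (mem_branch_self hu') v (mem_branch.2 ⟨hv', huv⟩)).mono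
    ((Finset.subset_biUnion_of_mem f hC).trans Finset.subset_union_right)

lemma spannerWeight_star_union_biUnion_le (hw : ∀ e, 0 ≤ w e) {S : Finset V}
    (hS : IsTreeConvex hG S) {c : V} (hc : c ∈ S)
    (hcent : ∀ C ∈ branches hG c S, 2 * C.card ≤ S.card) {f : Finset V → Finset (V × V)}
    (hf : ∀ C ∈ branches hG c S, spannerWeight hG w (f C) ≤ C.card * inducedWeight G w C) :
    spannerWeight hG w (S.image (·, c) ∪ (branches hG c S).biUnion f) ≤
      S.card * inducedWeight G w S := by
  have hbranches : ∑ C ∈ branches hG c S, spannerWeight hG w (f C) ≤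
      ∑ C ∈ branches hG c S, C.card * inducedWeight G w (insert c C) :=
    Finset.sum_le_sum fun C hC => (hf C hC).trans <| by
      gcongr
      exact inducedWeight_mono hw (Finset.subset_insert c C)
  linarith [spannerWeight_union_le (hG := hG) hw (S.image (·, c)) ((branches hG c S).biUnion f),
    spannerWeight_biUnion_le (hG := hG) hw (branches hG c S) f, spannerWeight_star_le hw hS hc,
    two_mul_sum_card_mul_inducedWeight_le hw hc hcent]

lemma exists_hopJoined_two_of_isTreeConvex (hw : ∀ e, 0 ≤ w e) (S : Finset V)
    (hS : IsTreeConvex hG S) :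
    ∃ H : Finset (V × V), (∀ u ∈ S, ∀ v ∈ S, HopJoined hG w 2 H u v) ∧
      spannerWeight hG w H ≤ S.card * inducedWeight G w S := by
  induction S using Finset.strongInduction with
  | H S ih =>
    rcases S.eq_empty_or_nonempty with rfl | hne
    · exact ⟨∅, by simp, by simp [spannerWeight]⟩
    obtain ⟨c, hcS, hcent⟩ := exists_two_mul_card_branch_le hS hne
    have hrec : ∀ C ∈ branches hG c S, ∃ H : Finset (V × V),
        (∀ u ∈ C, ∀ v ∈ C, HopJoined hG w 2 H u v) ∧
          spannerWeight hG w H ≤ C.card * inducedWeight G w C := fun C hC => by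
      obtain ⟨u, -, rfl⟩ := mem_branches.1 hC
      exact ih _ (branch_subset_erase.trans_ssubset (Finset.erase_ssubset hcS))
        (isTreeConvex_branch hS c u)
    choose! f hf_joined hf_weight using hrec
    exact ⟨_, hopJoined_two_star_union_biUnion hf_joined,
      spannerWeight_star_union_biUnion_le hw hS hcS hcent hf_weight⟩

end Spanner

end SimpleGraph.IsTree

/-- every weighted tree on `n` vertices with total edge weight `L` admits
a `1`-spanner of its tree metric with hop-diameter `2` and total edge weight at most `n * L`. -/
theorem stmt3 {V : Type*} [Fintype V] (G : SimpleGraph V) (hG : G.IsTree)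
    (w : Sym2 V → ℝ) (hw : ∀ e, 0 ≤ w e) :
    ∃ H : Finset (V × V), IsKHopTreeSpanner hG w 2 H ∧
      spannerWeight hG w H ≤ (Fintype.card V : ℝ) * treeWeight G w := by
  classical
  obtain ⟨H, hH, hweight⟩ := SimpleGraph.IsTree.exists_hopJoined_two_of_isTreeConvex hw
    Finset.univ fun _ _ _ _ x _ => Finset.mem_univ x
  exact ⟨H, fun u v => hH u (Finset.mem_univ u) v (Finset.mem_univ v),
    by rwa [SimpleGraph.treeWeight_eq_inducedWeight_univ, ← Finset.card_univ]⟩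
end

section
/- For every n and every p with 1 ≤ p ≤ n, for any (p,n) line metric, any spanner with hop-diameter 2 has lightness at least (1/16)·(p²/n). -/
/-- The `n`-point uniform line metric: the points `i/n` for `0 ≤ i ≤ n-1`. -/
noncomputable def uniformLine (n : ℕ) : Finset ℝ :=
  (Finset.range n).image (fun i : ℕ => (i : ℝ) / n)

/-- A `(p,n)` line metric: `p` points in `[0,1]` such that each interval
`[i/n, (i+1)/n)` contains at most one point. -/
def IsPNLineMetric (P : Finset ℝ) (p n : ℕ) : Prop :=
  P.card = p ∧ (↑P : Set ℝ) ⊆ Set.Icc 0 1 ∧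
    ∀ i < n, (P.filter (fun x => (i : ℝ) / n ≤ x ∧ x < ((i : ℝ) + 1) / n)).card ≤ 1

/-- Total weight of a set of edges between points on the line. -/
noncomputable def lineWeight (H : Finset (ℝ × ℝ)) : ℝ := ∑ e ∈ H, |e.1 - e.2|

/-- `H` joins every pair of points of `P` by a path of at most `k` edges
(hop-diameter `k`). -/
def HopConnected (H : Finset (ℝ × ℝ)) (P : Finset ℝ) (k : ℕ) : Prop :=
  ∀ u ∈ P, ∀ v ∈ P, ∃ l : List ℝ, l.head? = some u ∧ l.getLast? = some v ∧
    l.length ≤ k + 1 ∧ l.Chain' (fun a b => (a, b) ∈ H ∨ (b, a) ∈ H)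

/-- The weight of a minimum spanning tree of a finite set of points on the line:
the diameter `max - min`. -/
noncomputable def mstLine (P : Finset ℝ) : ℝ := sSup (↑P : Set ℝ) - sInf (↑P : Set ℝ)

/-!
Sort the points as `x₀ < ⋯ < x_{p-1}`. Distinct points lie in distinct cells, so
`n |x_k - x_l| ≥ |k - l| - 1`, and summing over all ordered pairs gives
`n ∑ |u - v| ≥ (p³ - p)/3 - p²`. On the other hand any two points `u, v` are joined through a
middle point `b`, and `|u - v| ≤ |u - b| + |b - v|` is at most the weighted degree of `u` plus that
of `v`; as the weighted degrees add up to twice the weight of `H`, `∑ |u - v| ≤ 4p w(H)`.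
Hence `p² ≤ 16 n w(H)` once `p ≥ 13`, while the MST weight is at most `1`. For `p ≤ 12` the
factor `p²/(16n)` is below `1`, and the MST weight, the distance between the two extreme points,
is at most the weight of the two-hop path joining them.
-/

def EqOrAdj (H : Finset (ℝ × ℝ)) (a b : ℝ) : Prop := a = b ∨ (a, b) ∈ H ∨ (b, a) ∈ H

noncomputable def weightedDegree (H : Finset (ℝ × ℝ)) (u : ℝ) : ℝ :=
  (∑ e ∈ H with e.1 = u, |e.1 - e.2|) + ∑ e ∈ H with e.2 = u, |e.1 - e.2|

section Spanner

variable {H : Finset (ℝ × ℝ)} {P : Finset ℝ} {a b c : ℝ}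

lemma EqOrAdj.symm (h : EqOrAdj H a b) : EqOrAdj H b a := by
  unfold EqOrAdj at *; tauto

lemma HopConnected.exists_eqOrAdj (h : HopConnected H P 2) (ha : a ∈ P)
    (hc : c ∈ P) : ∃ b, EqOrAdj H a b ∧ EqOrAdj H b c := by
  obtain ⟨l, hhead, hlast, hlen, (hchain : l.IsChain _)⟩ := h a ha c hc
  rcases l with _ | ⟨x, _ | ⟨y, _ | ⟨z, _ | ⟨w, t⟩⟩⟩⟩
  · simp at hhead
  · simp only [List.head?_cons, List.getLast?_singleton, Option.some.injEq] at hhead hlast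
    exact ⟨a, .inl rfl, .inl (hhead.symm.trans hlast)⟩
  · simp only [List.head?_cons, List.getLast?_cons_cons, List.getLast?_singleton,
      Option.some.injEq, List.isChain_cons_cons, List.isChain_singleton, and_true]
      at hhead hlast hchain
    subst hhead hlast
    exact ⟨y, .inr hchain, .inl rfl⟩
  · simp only [List.head?_cons, List.getLast?_cons_cons, List.getLast?_singleton,
      Option.some.injEq, List.isChain_cons_cons, List.isChain_singleton, and_true]
      at hhead hlast hchain
    subst hhead hlast
    exact ⟨y, .inr hchain.1, .inr hchain.2⟩
  · simp at hlen; omega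

lemma lineWeight_nonneg (H : Finset (ℝ × ℝ)) : 0 ≤ lineWeight H :=
  Finset.sum_nonneg fun _ _ => abs_nonneg _

lemma weightedDegree_nonneg (H : Finset (ℝ × ℝ)) (u : ℝ) : 0 ≤ weightedDegree H u :=
  add_nonneg (Finset.sum_nonneg fun _ _ => abs_nonneg _)
    (Finset.sum_nonneg fun _ _ => abs_nonneg _)

lemma EqOrAdj.abs_sub_le_weightedDegree (h : EqOrAdj H a b) : |a - b| ≤ weightedDegree H a := by
  have hfst := Finset.sum_nonneg (s := H.filter (·.1 = a)) fun e _ => abs_nonneg (e.1 - e.2)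
  have hsnd := Finset.sum_nonneg (s := H.filter (·.2 = a)) fun e _ => abs_nonneg (e.1 - e.2)
  rcases h with rfl | hab | hba
  · simpa using weightedDegree_nonneg H a
  · have := Finset.single_le_sum (fun e _ => abs_nonneg (e.1 - e.2))
      (Finset.mem_filter.2 ⟨hab, rfl⟩ : (a, b) ∈ H.filter (·.1 = a))
    unfold weightedDegree; linarith
  · have := Finset.single_le_sum (fun e _ => abs_nonneg (e.1 - e.2))
      (Finset.mem_filter.2 ⟨hba, rfl⟩ : (b, a) ∈ H.filter (·.2 = a))
    rw [abs_sub_comm] at this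
    unfold weightedDegree; linarith

lemma sum_weightedDegree_le (H : Finset (ℝ × ℝ)) (P : Finset ℝ) :
    ∑ u ∈ P, weightedDegree H u ≤ 2 * lineWeight H := by
  have fiber_nonneg (g : ℝ × ℝ → ℝ) (u : ℝ) : 0 ≤ ∑ e ∈ H with g e = u, |e.1 - e.2| :=
    Finset.sum_nonneg fun _ _ => abs_nonneg _
  have h1 := Finset.sum_fiberwise_le_sum_of_sum_fiber_nonneg (t := P) (g := Prod.fst)
    (fun u _ => fiber_nonneg Prod.fst u)
  have h2 := Finset.sum_fiberwise_le_sum_of_sum_fiber_nonneg (t := P) (g := Prod.snd)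
    (fun u _ => fiber_nonneg Prod.snd u)
  simp only [weightedDegree, Finset.sum_add_distrib]
  unfold lineWeight; linarith

lemma EqOrAdj.abs_sub_le_sum_joining (h : EqOrAdj H a b) :
    |a - b| ≤ ∑ e ∈ H with e = (a, b) ∨ e = (b, a), |e.1 - e.2| := by
  rcases h with rfl | hab | hba
  · simpa using Finset.sum_nonneg fun e _ => abs_nonneg (e.1 - e.2)
  · exact Finset.single_le_sum (f := fun e : ℝ × ℝ => |e.1 - e.2|) (fun e _ => abs_nonneg _)
      (Finset.mem_filter.2 ⟨hab, .inl rfl⟩)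
  · rw [abs_sub_comm]
    exact Finset.single_le_sum (f := fun e : ℝ × ℝ => |e.1 - e.2|) (fun e _ => abs_nonneg _)
      (Finset.mem_filter.2 ⟨hba, .inr rfl⟩)

lemma EqOrAdj.abs_sub_le_lineWeight (hab : EqOrAdj H a b) (hbc : EqOrAdj H b c) :
    |a - c| ≤ lineWeight H := by
  rcases eq_or_ne a c with rfl | hac
  · simpa using lineWeight_nonneg H
  have hdisj : Disjoint (H.filter fun e => e = (a, b) ∨ e = (b, a))
      (H.filter fun e => e = (b, c) ∨ e = (c, b)) := by
    rw [Finset.disjoint_filter]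
    rintro e - (rfl | rfl) h <;> simp only [Prod.ext_iff] at h <;> grind
  calc |a - c| ≤ |a - b| + |b - c| := abs_sub_le a b c
    _ ≤ _ := add_le_add hab.abs_sub_le_sum_joining hbc.abs_sub_le_sum_joining
    _ = _ := (Finset.sum_union hdisj).symm
    _ ≤ lineWeight H := Finset.sum_le_sum_of_subset_of_nonneg
      (Finset.union_subset (Finset.filter_subset _ _) (Finset.filter_subset _ _))
      fun _ _ _ => abs_nonneg _

lemma HopConnected.mstLine_le_lineWeight (h : HopConnected H P 2) : mstLine P ≤ lineWeight H := by
  rcases P.eq_empty_or_nonempty with rfl | hne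
  · simpa [mstLine] using lineWeight_nonneg H
  obtain ⟨b, hab, hbc⟩ := h.exists_eqOrAdj (P.max'_mem hne) (P.min'_mem hne)
  rw [mstLine, hne.csSup_eq_max', hne.csInf_eq_min']
  exact (le_abs_self _).trans (hab.abs_sub_le_lineWeight hbc)

lemma HopConnected.sum_sum_abs_sub_le (h : HopConnected H P 2) :
    ∑ u ∈ P, ∑ v ∈ P, |u - v| ≤ 4 * P.card * lineWeight H := by
  calc ∑ u ∈ P, ∑ v ∈ P, |u - v|
      ≤ ∑ u ∈ P, ∑ v ∈ P, (weightedDegree H u + weightedDegree H v) := by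
        refine Finset.sum_le_sum fun u hu => Finset.sum_le_sum fun v hv => ?_
        obtain ⟨b, hub, hbv⟩ := h.exists_eqOrAdj hu hv
        calc |u - v| ≤ |u - b| + |b - v| := abs_sub_le u b v
          _ ≤ _ := add_le_add hub.abs_sub_le_weightedDegree
            ((abs_sub_comm b v).trans_le hbv.symm.abs_sub_le_weightedDegree)
    _ = 2 * P.card * ∑ u ∈ P, weightedDegree H u := by
        simp only [Finset.sum_add_distrib, Finset.sum_const, nsmul_eq_mul, ← Finset.mul_sum]
        ring
    _ ≤ 2 * P.card * (2 * lineWeight H) := by gcongr; exact sum_weightedDegree_le H P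
    _ = 4 * P.card * lineWeight H := by ring

end Spanner

lemma mstLine_nonneg (P : Finset ℝ) : 0 ≤ mstLine P :=
  sub_nonneg.2 (Real.sInf_le_sSup _ P.bddBelow P.bddAbove)

lemma mstLine_le_one {P : Finset ℝ} (hP : (↑P : Set ℝ) ⊆ Set.Icc 0 1) :
    mstLine P ≤ 1 := by
  have hsup : sSup (↑P : Set ℝ) ≤ 1 := Real.sSup_le (fun x hx => (hP hx).2) zero_le_one
  have hinf : 0 ≤ sInf (↑P : Set ℝ) := Real.sInf_nonneg fun x hx => (hP hx).1
  unfold mstLine; linarith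

lemma Fin.add_le_add_of_strictMono {p : ℕ} {f : Fin p → ℕ} (hf : StrictMono f) {k l : Fin p}
    (hkl : k ≤ l) : (l : ℕ) + f k ≤ f l + k := by
  have hcard : (Finset.Ico k l).card ≤ (Finset.Ico (f k) (f l)).card :=
    Finset.card_le_card_of_injOn f (fun i hi => by
      simp only [Finset.coe_Ico, Set.mem_Ico] at hi ⊢
      exact ⟨hf.monotone hi.1, hf hi.2⟩) hf.injective.injOn
  rw [Fin.card_Ico, Nat.card_Ico] at hcard
  have := hf.monotone hkl
  omega

lemma sum_range_natCast_sub (p : ℕ) :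
    ∑ k ∈ Finset.range p, ((p : ℝ) - k) = p * (p + 1) / 2 := by
  induction p with
  | zero => simp
  | succ p ih =>
    rw [Finset.sum_range_succ']
    push_cast
    simp only [add_sub_add_right_eq_sub, ih]
    ring

lemma sum_range_abs_sub (p : ℕ) :
    ∑ k ∈ Finset.range p, ∑ l ∈ Finset.range p, |(k : ℝ) - l| = ((p : ℝ) ^ 3 - p) / 3 := by
  induction p with
  | zero => simp
  | succ p ih =>
    have hrow : ∑ k ∈ Finset.range p, |(p : ℝ) - k| = p * (p + 1) / 2 := by
      rw [← sum_range_natCast_sub]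
      refine Finset.sum_congr rfl fun k hk => abs_of_nonneg (sub_nonneg.2 ?_)
      exact_mod_cast (Finset.mem_range.1 hk).le
    simp only [Finset.sum_range_succ, Finset.sum_add_distrib, ih, sub_self, abs_zero, add_zero]
    rw [Finset.sum_congr rfl fun (k : ℕ) _ => abs_sub_comm (k : ℝ) p, hrow]
    push_cast
    ring

lemma sum_abs_sub_fin (p : ℕ) :
    ∑ k : Fin p, ∑ l : Fin p, |(k : ℝ) - l| = ((p : ℝ) ^ 3 - p) / 3 := by
  rw [← sum_range_abs_sub, ← Fin.sum_univ_eq_sum_range]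
  exact Finset.sum_congr rfl fun k _ => Fin.sum_univ_eq_sum_range (fun l => |(k : ℝ) - l|) p

namespace IsPNLineMetric

variable {P : Finset ℝ} {p n : ℕ}

lemma floor_mul_lt_floor_mul (hP : IsPNLineMetric P p n) (hn : 0 < n) {y z : ℝ} (hy : y ∈ P)
    (hz : z ∈ P) (hyz : y < z) : ⌊y * n⌋₊ < ⌊z * n⌋₊ := by
  obtain ⟨-, hIcc, hcell⟩ := hP
  have hnR : (0 : ℝ) < n := Nat.cast_pos.2 hn
  refine (Nat.floor_le_floor (by gcongr)).lt_of_ne fun heq => ?_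
  set i := ⌊y * n⌋₊
  have hi : i < n := (Nat.floor_lt (mul_nonneg (hIcc hy).1 hnR.le)).2
    (by nlinarith [(hIcc hz).2])
  have mem_cell : ∀ x ∈ P, ⌊x * n⌋₊ = i →
      x ∈ P.filter fun x => (i : ℝ) / n ≤ x ∧ x < ((i : ℝ) + 1) / n := by
    rintro x hx hxi
    rw [← hxi]
    exact Finset.mem_filter.2 ⟨hx, (div_le_iff₀ hnR).2 (Nat.floor_le (mul_nonneg (hIcc hx).1
      hnR.le)), (lt_div_iff₀ hnR).2 (Nat.lt_floor_add_one _)⟩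
  exact (hcell i hi).not_gt
    (Finset.one_lt_card.2 ⟨y, mem_cell y hy rfl, z, mem_cell z hz heq.symm, hyz.ne⟩)

lemma abs_sub_le_mul_abs_sub (hP : IsPNLineMetric P p n) (hn : 0 < n) (k l : Fin p) :
    |(k : ℝ) - l| - 1 ≤ n * |P.orderEmbOfFin hP.1 k - P.orderEmbOfFin hP.1 l| := by
  wlog hkl : k ≤ l generalizing k l
  · rw [abs_sub_comm, abs_sub_comm (P.orderEmbOfFin hP.1 k)]
    exact this l k (le_of_not_ge hkl)
  set x := P.orderEmbOfFin hP.1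
  have hmem (j : Fin p) : x j ∈ P := P.orderEmbOfFin_mem hP.1 j
  have hcells : StrictMono fun j => ⌊x j * n⌋₊ := fun i j hij =>
    hP.floor_mul_lt_floor_mul hn (hmem i) (hmem j) (x.strictMono hij)
  have hgap : ((l : ℕ) + ⌊x k * n⌋₊ : ℝ) ≤ ⌊x l * n⌋₊ + (k : ℕ) := by
    exact_mod_cast Fin.add_le_add_of_strictMono hcells hkl
  have hl : (⌊x l * n⌋₊ : ℝ) ≤ x l * n :=
    Nat.floor_le (mul_nonneg (hP.2.1 (hmem l)).1 n.cast_nonneg)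
  have hk : x k * n < ⌊x k * n⌋₊ + 1 := Nat.lt_floor_add_one _
  have hkl' : (k : ℝ) ≤ l := by exact_mod_cast hkl
  rw [abs_of_nonpos (by linarith), abs_of_nonpos (sub_nonpos.2 (x.monotone hkl))]
  linarith

lemma sum_sum_abs_sub_ge (hP : IsPNLineMetric P p n) (hn : 0 < n) :
    ((p : ℝ) ^ 3 - p) / 3 - p ^ 2 ≤ n * ∑ u ∈ P, ∑ v ∈ P, |u - v| := by
  rw [← P.map_orderEmbOfFin_univ hP.1]
  simp only [Finset.sum_map, Finset.mul_sum]
  calc ((p : ℝ) ^ 3 - p) / 3 - p ^ 2 = ∑ k : Fin p, ∑ l : Fin p, (|(k : ℝ) - l| - 1) := by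
        simp only [Finset.sum_sub_distrib, sum_abs_sub_fin, Finset.sum_const, Finset.card_univ,
          Fintype.card_fin, nsmul_eq_mul]
        ring
    _ ≤ _ := Finset.sum_le_sum fun k _ => Finset.sum_le_sum fun l _ =>
        hP.abs_sub_le_mul_abs_sub hn k l

lemma sq_le_of_hopConnected (hP : IsPNLineMetric P p n)
    {H : Finset (ℝ × ℝ)} (hhop : HopConnected H P 2) (hn : 0 < n) (hp : 13 ≤ p) :
    (p : ℝ) ^ 2 ≤ 16 * n * lineWeight H := by
  have hlower := hP.sum_sum_abs_sub_ge hn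
  have hupper := hhop.sum_sum_abs_sub_le
  rw [hP.1] at hupper
  have hpR : (13 : ℝ) ≤ p := by exact_mod_cast hp
  have hnR : (0 : ℝ) < n := Nat.cast_pos.2 hn
  have hcubic : (p : ℝ) ^ 3 - p - 3 * p ^ 2 ≤ 12 * n * p * lineWeight H := by
    nlinarith [mul_le_mul_of_nonneg_left hupper hnR.le]
  nlinarith

end IsPNLineMetric

theorem stmt8_general (n p : ℕ) (hpn : p ≤ n) (P : Finset ℝ)
    (hP : IsPNLineMetric P p n) (H : Finset (ℝ × ℝ))
    (hhop : HopConnected H P 2) :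
    (1 / 16 : ℝ) * ((p : ℝ) ^ 2 / (n : ℝ)) * mstLine P ≤ lineWeight H := by
  have hD0 := mstLine_nonneg P
  have hD1 := mstLine_le_one hP.2.1
  have hpnR : (p : ℝ) ≤ n := by exact_mod_cast hpn
  rcases le_or_gt p 12 with hsmall | hlarge
  · have hcoef : (1 / 16 : ℝ) * ((p : ℝ) ^ 2 / n) ≤ 1 := by
      have hpR : (p : ℝ) ≤ 12 := by exact_mod_cast hsmall
      have : (p : ℝ) ^ 2 / n ≤ p :=
        div_le_of_le_mul₀ (by positivity) (by positivity) (by nlinarith)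
      linarith
    calc _ ≤ 1 * mstLine P := by gcongr
      _ ≤ lineWeight H := by simpa using hhop.mstLine_le_lineWeight
  · have hn : 0 < n := by omega
    have hsq := hP.sq_le_of_hopConnected hhop hn hlarge
    calc _ ≤ (1 / 16 : ℝ) * ((p : ℝ) ^ 2 / n) * 1 := by gcongr
      _ ≤ lineWeight H := by
        rw [mul_one, ← mul_div_assoc, div_le_iff₀ (by positivity)]
        linarith

/-- for every `1 ≤ p ≤ n`, any spanner with hop-diameter `2` of a `(p,n)`
line metric has lightness at least `(1/16) * (p^2/n)`. -/
theorem stmt8 (n p : ℕ) (hp : 1 ≤ p) (hpn : p ≤ n) (P : Finset ℝ)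
    (hP : IsPNLineMetric P p n) (H : Finset (ℝ × ℝ)) (hHP : H ⊆ P ×ˢ P)
    (hhop : HopConnected H P 2) :
    (1 / 16 : ℝ) * ((p : ℝ) ^ 2 / (n : ℝ)) * mstLine P ≤ lineWeight H :=
  stmt8_general n p hpn P hP H hhop
end

section
/- Fix a (p,n) line metric partitioned into consecutive intervals of length ℓ/n each containing ℓ points. If γ·n of the points are global (incident to an edge with endpoints in two different intervals), then the total weight of the global edges is at least γ²·ℓ/16 times the weight of an MST of the n-point uniform line metric; equivalently, at least (1/2)·(γn/2)·(γℓ/(4n)) in absolute weight. -/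
/-- The index of the length-`ℓ/n` interval containing `x`. -/
noncomputable def intervalIdx (n ℓ : ℕ) (x : ℝ) : ℤ := ⌊x * n / ℓ⌋

open Finset

-- The number of steps from `i` to the nearest index outside its block `[bℓ, (b+1)ℓ)`.
def boundaryDist (ℓ i : ℕ) : ℕ := min (i % ℓ + 1) (ℓ - i % ℓ)

lemma boundaryDist_le_abs_sub {ℓ a b : ℕ} (h : a / ℓ ≠ b / ℓ) :
    (boundaryDist ℓ a : ℝ) ≤ |(a : ℝ) - b| := by
  rcases Nat.eq_zero_or_pos ℓ with rfl | hℓ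
  · simp at h
  have ha := Nat.div_add_mod a ℓ
  have hb := Nat.div_add_mod b ℓ
  have hma := Nat.mod_lt a hℓ
  have hmb := Nat.mod_lt b hℓ
  have key : boundaryDist ℓ a + a ≤ b ∨ boundaryDist ℓ a + b ≤ a := by
    unfold boundaryDist
    rcases lt_or_gt_of_ne h with h | h
    · have := Nat.mul_le_mul_left ℓ h
      rw [Nat.mul_succ] at this
      omega
    · have := Nat.mul_le_mul_left ℓ h
      rw [Nat.mul_succ] at this
      omega
  rcases key with key | key
  · have : (boundaryDist ℓ a : ℝ) + a ≤ b := by exact_mod_cast key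
    rw [abs_sub_comm]; exact le_abs.2 (Or.inl (by linarith))
  · have : (boundaryDist ℓ a : ℝ) + b ≤ a := by exact_mod_cast key
    exact le_abs.2 (Or.inl (by linarith))

lemma card_filter_mod_mem_le (ℓ m : ℕ) (R : Finset ℕ) :
    #((range (ℓ * m)).filter (fun i => i % ℓ ∈ R)) ≤ m * #R := by
  calc _ ≤ #(range m ×ˢ R) := by
        refine card_le_card_of_injOn (fun i => (i / ℓ, i % ℓ)) (fun i hi => ?_) fun a _ b _ h => ?_
        · simp only [coe_filter, mem_range, Set.mem_ofPred_eq] at hi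
          simp only [coe_product, coe_range, Set.mem_prod, Set.mem_Iio, mem_coe]
          exact ⟨Nat.div_lt_of_lt_mul hi.1, hi.2⟩
        · simp only [Prod.mk.injEq] at h
          rw [← Nat.div_add_mod a ℓ, ← Nat.div_add_mod b ℓ, h.1, h.2]
    _ = m * #R := by rw [card_product, card_range]

lemma card_filter_boundaryDist_le {ℓ m : ℕ} {G : Finset ℕ} (hG : G ⊆ range (ℓ * m)) (t : ℕ) :
    #(G.filter (fun i => boundaryDist ℓ i ≤ t)) ≤ 2 * m * t := by
  calc #(G.filter _)
      ≤ #((range (ℓ * m)).filter (fun i => i % ℓ ∈ range t ∪ Ico (ℓ - t) ℓ)) := by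
        refine card_le_card fun i hi => ?_
        rw [mem_filter] at hi ⊢
        have hiℓ : i < ℓ * m := mem_range.1 (hG hi.1)
        have hℓ : 0 < ℓ := Nat.pos_of_ne_zero (by rintro rfl; simp at hiℓ)
        have := Nat.mod_lt i hℓ
        have := hi.2
        unfold boundaryDist at this
        simp only [mem_range, mem_union, mem_Ico]
        omega
    _ ≤ m * #(range t ∪ Ico (ℓ - t) ℓ) := card_filter_mod_mem_le ℓ m _
    _ ≤ m * (t + t) := by
        gcongr
        refine (card_union_le _ _).trans ?_
        simp only [card_range, Nat.card_Ico]
        omega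
    _ = 2 * m * t := by ring

lemma sq_card_le_eight_mul_sum_boundaryDist {ℓ m : ℕ} {G : Finset ℕ} (hG : G ⊆ range (ℓ * m)) :
    (#G : ℝ) ^ 2 ≤ 8 * m * ∑ i ∈ G, (boundaryDist ℓ i : ℝ) := by
  rcases Nat.eq_zero_or_pos m with rfl | hm
  · simp [subset_empty.1 (by simpa using hG)]
  set k : ℝ := (#G : ℝ)
  set x : ℝ := k / (4 * m)
  set t := ⌊x⌋₊
  have hm' : (0 : ℝ) < m := by exact_mod_cast hm
  have hx : 0 ≤ x := by positivity
  have htx : (t : ℝ) ≤ x := Nat.floor_le hx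
  have hxt : x < t + 1 := Nat.lt_floor_add_one x
  have hfar : k ≤ #(G.filter (fun i => t < boundaryDist ℓ i)) + 2 * m * t := by
    have hsplit := card_filter_add_card_filter_not (s := G) (fun i => boundaryDist ℓ i ≤ t)
    have hnear := card_filter_boundaryDist_le hG t
    simp only [not_le] at hsplit
    have : #G ≤ #(G.filter (fun i => t < boundaryDist ℓ i)) + 2 * m * t := by omega
    simp only [k]
    exact_mod_cast this
  have hmarkov : ((t : ℝ) + 1) * #(G.filter (fun i => t < boundaryDist ℓ i)) ≤
      ∑ i ∈ G, (boundaryDist ℓ i : ℝ) := by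
    calc ((t : ℝ) + 1) * #(G.filter (fun i => t < boundaryDist ℓ i))
        ≤ ∑ i ∈ G.filter (fun i => t < boundaryDist ℓ i), (boundaryDist ℓ i : ℝ) := by
          rw [mul_comm, ← nsmul_eq_mul]
          refine card_nsmul_le_sum _ _ _ fun i hi => ?_
          exact_mod_cast (mem_filter.1 hi).2
      _ ≤ ∑ i ∈ G, (boundaryDist ℓ i : ℝ) :=
          sum_le_sum_of_subset_of_nonneg (filter_subset _ _) fun _ _ _ => Nat.cast_nonneg _
  have hhalf : k / 2 ≤ #(G.filter (fun i => t < boundaryDist ℓ i)) := by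
    have : k = 4 * m * x := by simp only [x]; field_simp
    nlinarith
  calc k ^ 2 = 8 * m * (x * (k / 2)) := by simp only [x]; field_simp; ring
    _ ≤ 8 * m * ((t + 1) * #(G.filter (fun i => t < boundaryDist ℓ i))) := by
        gcongr
    _ ≤ 8 * m * ∑ i ∈ G, (boundaryDist ℓ i : ℝ) := by gcongr

lemma sum_le_two_mul_sum_of_exists_incident {ι α : Type*} {S : Finset ι} {p : ι → α}
    (hp : Set.InjOn p S) {E : Finset (α × α)} {f : ι → ℝ} {w : α × α → ℝ}
    (hw : ∀ e ∈ E, 0 ≤ w e) (h : ∀ i ∈ S, ∃ e ∈ E, (e.1 = p i ∨ e.2 = p i) ∧ f i ≤ w e) :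
    ∑ i ∈ S, f i ≤ 2 * ∑ e ∈ E, w e := by
  classical
  have hends : ∀ e : α × α, #(S.filter (fun i => e.1 = p i ∨ e.2 = p i)) ≤ 2 := fun e =>
    calc #(S.filter _) ≤ #({e.1, e.2} : Finset α) :=
          card_le_card_of_injOn p (fun i hi => by simp_all [eq_comm])
            (hp.mono (coe_subset.2 (filter_subset _ _)))
      _ ≤ 2 := card_le_two
  calc ∑ i ∈ S, f i
      ≤ ∑ i ∈ S, ∑ e ∈ E, if e.1 = p i ∨ e.2 = p i then w e else 0 := by
        refine sum_le_sum fun i hi => ?_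
        obtain ⟨e, he, hinc, hfe⟩ := h i hi
        calc f i ≤ if e.1 = p i ∨ e.2 = p i then w e else 0 := by rwa [if_pos hinc]
          _ ≤ _ := single_le_sum (f := fun e => if e.1 = p i ∨ e.2 = p i then w e else 0)
              (fun e he => by split_ifs <;> simp [hw e he]) he
    _ = ∑ e ∈ E, #(S.filter (fun i => e.1 = p i ∨ e.2 = p i)) * w e := by
        rw [sum_comm]
        refine sum_congr rfl fun e _ => ?_
        rw [← sum_filter, sum_const, nsmul_eq_mul]
    _ ≤ ∑ e ∈ E, 2 * w e := by
        refine sum_le_sum fun e he => ?_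
        gcongr
        · exact hw e he
        · exact_mod_cast hends e
    _ = 2 * ∑ e ∈ E, w e := (mul_sum _ _ _).symm

lemma intervalIdx_natCast_div {n : ℕ} (hn : 0 < n) (ℓ j : ℕ) :
    intervalIdx n ℓ ((j : ℝ) / n) = (j / ℓ : ℕ) := by
  rw [intervalIdx, div_mul_cancel₀ _ (by positivity), ← Nat.floor_div_eq_div (K := ℝ),
    Int.natCast_floor_eq_floor (by positivity)]

lemma boundaryDist_div_le_abs_sub {n ℓ : ℕ} (hn : 0 < n) {e : ℝ × ℝ}
    (he : e ∈ uniformLine n ×ˢ uniformLine n) (hglob : intervalIdx n ℓ e.1 ≠ intervalIdx n ℓ e.2)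
    {i : ℕ} (hi : e.1 = (i : ℝ) / n ∨ e.2 = (i : ℝ) / n) :
    (boundaryDist ℓ i : ℝ) / n ≤ |e.1 - e.2| := by
  obtain ⟨⟨a, -, ha⟩, ⟨b, -, hb⟩⟩ : (∃ a < n, (a : ℝ) / n = e.1) ∧ ∃ b < n, (b : ℝ) / n = e.2 := by
    simpa [uniformLine] using he
  rw [← ha, ← hb, intervalIdx_natCast_div hn, intervalIdx_natCast_div hn] at hglob
  have hab : a / ℓ ≠ b / ℓ := by exact_mod_cast hglob
  have hcancel : ∀ j : ℕ, (j : ℝ) / n = i / n → j = i := fun j hj => by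
    field_simp at hj; exact_mod_cast hj
  rw [← ha, ← hb, ← sub_div, abs_div, Nat.abs_cast]
  gcongr
  rcases hi with hi | hi
  · rw [hcancel a (ha.trans hi)] at hab ⊢
    exact boundaryDist_le_abs_sub hab
  · rw [hcancel b (hb.trans hi)] at hab
    rw [abs_sub_comm, hcancel b (hb.trans hi)]
    exact boundaryDist_le_abs_sub hab.symm

theorem stmt9_general (n ℓ : ℕ) (hn : 0 < n) (hdvd : ℓ ∣ n)
    (H : Finset (ℝ × ℝ)) (hHP : H ⊆ uniformLine n ×ˢ uniformLine n)
    (γ : ℝ)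
    (hcount : (((uniformLine n).filter (fun x => ∃ e ∈ H, (e.1 = x ∨ e.2 = x) ∧
        intervalIdx n ℓ e.1 ≠ intervalIdx n ℓ e.2)).card : ℝ) = γ * n) :
    γ ^ 2 * (ℓ : ℝ) / 16 * (((n : ℝ) - 1) / (n : ℝ)) ≤
      ∑ e ∈ H.filter (fun e => intervalIdx n ℓ e.1 ≠ intervalIdx n ℓ e.2),
        |e.1 - e.2| := by
  classical
  obtain ⟨m, hnm⟩ := hdvd
  set W := ∑ e ∈ H.filter (fun e => intervalIdx n ℓ e.1 ≠ intervalIdx n ℓ e.2), |e.1 - e.2|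
  set G := (range n).filter fun i : ℕ => ∃ e ∈ H, (e.1 = (i : ℝ) / n ∨ e.2 = (i : ℝ) / n) ∧
    intervalIdx n ℓ e.1 ≠ intervalIdx n ℓ e.2
  have hn' : (0 : ℝ) < n := by exact_mod_cast hn
  have hinj : Set.InjOn (fun i : ℕ => (i : ℝ) / n) G := fun a _ b _ hab => by
    field_simp at hab; exact_mod_cast hab
  have hk : (#G : ℝ) = γ * n := by
    rw [← hcount, uniformLine, filter_image, card_image_of_injOn hinj]
  have hcharge : ∑ i ∈ G, (boundaryDist ℓ i : ℝ) / n ≤ 2 * W :=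
    sum_le_two_mul_sum_of_exists_incident hinj (fun _ _ => abs_nonneg _) fun i hi => by
      obtain ⟨e, he, hinc, hglob⟩ := (mem_filter.1 hi).2
      exact ⟨e, mem_filter.2 ⟨he, hglob⟩, hinc, boundaryDist_div_le_abs_sub hn (hHP he) hglob hinc⟩
  have hspread : (#G : ℝ) ^ 2 ≤ 8 * m * ∑ i ∈ G, (boundaryDist ℓ i : ℝ) :=
    sq_card_le_eight_mul_sum_boundaryDist (hnm ▸ filter_subset _ _)
  rw [← sum_div, div_le_iff₀ hn'] at hcharge
  have hnℓm : (n : ℝ) = ℓ * m := by exact_mod_cast hnm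
  have hW : γ ^ 2 * ℓ / 16 ≤ W := by
    have : γ ^ 2 * ℓ * n ^ 2 ≤ 16 * W * n ^ 2 := by
      calc γ ^ 2 * ℓ * n ^ 2 = ℓ * (#G : ℝ) ^ 2 := by rw [hk]; ring
        _ ≤ ℓ * (8 * m * ∑ i ∈ G, (boundaryDist ℓ i : ℝ)) := by gcongr
        _ = 8 * n * ∑ i ∈ G, (boundaryDist ℓ i : ℝ) := by rw [hnℓm]; ring
        _ ≤ 8 * n * (2 * W * n) := by gcongr
        _ = 16 * W * n ^ 2 := by ring
    linarith [le_of_mul_le_mul_right this (by positivity)]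
  have hfrac : ((n : ℝ) - 1) / n ≤ 1 := (div_le_one hn').2 (by linarith)
  calc γ ^ 2 * (ℓ : ℝ) / 16 * (((n : ℝ) - 1) / n) ≤ γ ^ 2 * ℓ / 16 * 1 := by gcongr
    _ ≤ W := by rwa [mul_one]

/-- partition the `n`-point uniform line metric into consecutive intervals
of length `ℓ/n`, each containing `ℓ` points (`ℓ ∣ n`). An edge of a spanner `H` is
*global* if its endpoints lie in different intervals, and a point is *global* if it is
incident to a global edge. If `γ·n` of the points are global, then the total weight of
the global edges is at least `γ²·ℓ/16` times the MST weight `(n-1)/n` of the uniform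
line metric. -/
theorem stmt9 (n ℓ : ℕ) (hn : 0 < n) (hℓ : 0 < ℓ) (hdvd : ℓ ∣ n)
    (H : Finset (ℝ × ℝ)) (hHP : H ⊆ uniformLine n ×ˢ uniformLine n)
    (γ : ℝ) (hγ0 : 0 ≤ γ) (hγ1 : γ ≤ 1)
    (hcount : (((uniformLine n).filter (fun x => ∃ e ∈ H, (e.1 = x ∨ e.2 = x) ∧
        intervalIdx n ℓ e.1 ≠ intervalIdx n ℓ e.2)).card : ℝ) = γ * n) :
    γ ^ 2 * (ℓ : ℝ) / 16 * (((n : ℝ) - 1) / (n : ℝ)) ≤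
      ∑ e ∈ H.filter (fun e => intervalIdx n ℓ e.1 ≠ intervalIdx n ℓ e.2),
        |e.1 - e.2| :=
  stmt9_general n ℓ hn hdvd H hHP γ hcount
end

section
/- Correctness of the recursive tree-spanner construction: for every k ≥ 3 and every weighted tree T, if u and v are two vertices, X is the separator set, T_u and T_v are the distinct components of T \ X containing u and v respectively, then there exist vertices u', v' ∈ X lying on the tree path from u to v such that u' neighbors T_u and v' neighbors T_v; consequently the edge (u,u'), a (k−2)-hop exact path from u' to v' in the recursive spanner on X, and the edge (v',v) form a k-hop path of total weight exactly δ_T(u,v). -/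
section Helpers
variable {V : Type*} {G : SimpleGraph V}

lemma treePath_isPath (hG : G.IsTree) (a b : V) : (treePath hG a b).IsPath :=
  (hG.existsUnique_path a b).exists.choose_spec

lemma treePath_eq (hG : G.IsTree) {a b : V} (p : G.Walk a b) (hp : p.IsPath) :
    treePath hG a b = p :=
  (hG.existsUnique_path a b).unique (treePath_isPath hG a b) hp

lemma walkWeight_append (w : Sym2 V → ℝ) {a b c : V} (p : G.Walk a b) (q : G.Walk b c) :
    walkWeight w (p.append q) = walkWeight w p + walkWeight w q := by
  simp [walkWeight, SimpleGraph.Walk.darts_append]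

lemma treeDist_add_of_mem (hG : G.IsTree) (w : Sym2 V → ℝ) {a b x : V}
    (hx : x ∈ (treePath hG a b).support) :
    treeDist hG w a x + treeDist hG w x b = treeDist hG w a b := by
  classical
  have hpath := treePath_isPath hG a b
  have h1 : treePath hG a x = (treePath hG a b).takeUntil x hx :=
    treePath_eq hG _ (hpath.takeUntil hx)
  have h2 : treePath hG x b = (treePath hG a b).dropUntil x hx :=
    treePath_eq hG _ (hpath.dropUntil hx)
  have h3 := (treePath hG a b).take_spec hx
  rw [treeDist, treeDist, treeDist, h1, h2, ← walkWeight_append, h3]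

lemma exists_sep {X : Set V} {a b : V} (p : G.Walk a b) (ha : a ∈ (Xᶜ : Set V))
    (hex : ∃ x ∈ p.support, x ∈ X) :
    ∃ x ∈ X, x ∈ p.support ∧ ∃ y : (Xᶜ : Set V),
      y ∈ ((G.induce Xᶜ).connectedComponentMk ⟨a, ha⟩).supp ∧ G.Adj x ↑y := by
  induction p with
  | nil =>
    obtain ⟨x, hx, hxX⟩ := hex
    simp only [SimpleGraph.Walk.support_nil, List.mem_singleton] at hx
    subst hx; exact absurd hxX ha
  | @cons a c b h q ih =>
    by_cases hc : c ∈ X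
    · refine ⟨c, hc, by simp, ⟨a, ha⟩, ?_, h.symm⟩
      simp [SimpleGraph.ConnectedComponent.mem_supp_iff]
    · have hc' : c ∈ (Xᶜ : Set V) := hc
      have hex' : ∃ x ∈ q.support, x ∈ X := by
        obtain ⟨x, hx, hxX⟩ := hex
        rw [SimpleGraph.Walk.support_cons] at hx
        rcases List.mem_cons.mp hx with rfl | hx
        · exact absurd hxX ha
        · exact ⟨x, hx, hxX⟩
      obtain ⟨x, hxX, hxs, y, hy, hadj⟩ := ih hc' hex'
      refine ⟨x, hxX, by simp [hxs], y, ?_, hadj⟩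
      have hcomp : (G.induce Xᶜ).connectedComponentMk ⟨a, ha⟩ =
          (G.induce Xᶜ).connectedComponentMk ⟨c, hc'⟩ :=
        SimpleGraph.ConnectedComponent.sound
          (SimpleGraph.Adj.reachable (by exact h))
      rw [hcomp]; exact hy

example : True := trivial

lemma comp_eq_of_avoid {X : Set V} {a b : V} (p : G.Walk a b) (ha : a ∈ (Xᶜ : Set V))
    (hb : b ∈ (Xᶜ : Set V)) (hall : ∀ x ∈ p.support, x ∉ X) :
    (G.induce Xᶜ).connectedComponentMk ⟨a, ha⟩ =
      (G.induce Xᶜ).connectedComponentMk ⟨b, hb⟩ := by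
  induction p with
  | nil => rfl
  | @cons a c b h q ih =>
    have hc : c ∈ (Xᶜ : Set V) := hall c (by simp)
    refine Eq.trans ?_ (ih hc hb (fun x hx => hall x (by simp [hx])))
    exact SimpleGraph.ConnectedComponent.sound
      (SimpleGraph.Adj.reachable (by exact h))

end Helpers

/-- correctness of the recursive tree-spanner construction. Let `T` be a
weighted tree and `X` a separator set each of whose components of `T \ X` has at most two
neighbors in `X`. If `u, v ∉ X` lie in distinct components `T_u ≠ T_v` of `T \ X`, then
there are `u', v' ∈ X` on the tree path from `u` to `v`, with `u'` neighboring `T_u` and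
`v'` neighboring `T_v`, such that
`δ_T(u,u') + δ_T(u',v') + δ_T(v',v) = δ_T(u,v)` (so the edge `(u,u')`, a `(k-2)`-hop exact
path from `u'` to `v'`, and the edge `(v',v)` form a `k`-hop path of weight exactly
`δ_T(u,v)`). -/
theorem stmt16 {V : Type*} (G : SimpleGraph V) (hG : G.IsTree) (w : Sym2 V → ℝ)
    (hw : ∀ e, 0 ≤ w e) (X : Set V)
    (hX2 : ∀ C : (G.induce Xᶜ).ConnectedComponent,
      {x : V | x ∈ X ∧ ∃ y : (Xᶜ : Set V), y ∈ C.supp ∧ G.Adj x ↑y}.ncard ≤ 2)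
    (u v : V) (hu : u ∉ X) (hv : v ∉ X)
    (hdiff : (G.induce Xᶜ).connectedComponentMk ⟨u, Set.mem_compl hu⟩ ≠
             (G.induce Xᶜ).connectedComponentMk ⟨v, Set.mem_compl hv⟩) :
    ∃ u' v' : V, u' ∈ X ∧ v' ∈ X ∧
      u' ∈ (treePath hG u v).support ∧ v' ∈ (treePath hG u v).support ∧
      (∃ y : (Xᶜ : Set V),
        y ∈ ((G.induce Xᶜ).connectedComponentMk ⟨u, Set.mem_compl hu⟩).supp ∧
          G.Adj u' ↑y) ∧
      (∃ y : (Xᶜ : Set V),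
        y ∈ ((G.induce Xᶜ).connectedComponentMk ⟨v, Set.mem_compl hv⟩).supp ∧
          G.Adj v' ↑y) ∧
      treeDist hG w u u' + treeDist hG w u' v' + treeDist hG w v' v =
        treeDist hG w u v := by
  classical
  have hu' : u ∈ (Xᶜ : Set V) := hu
  have hv' : v ∈ (Xᶜ : Set V) := hv
  set p := treePath hG u v with hp
  have hex : ∃ x ∈ p.support, x ∈ X := by
    by_contra hcon
    push_neg at hcon
    exact hdiff (comp_eq_of_avoid p hu' hv' hcon)
  obtain ⟨u', hu'X, hu'mem, yu, hyu, hadju⟩ := exists_sep p hu' hex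
  have hppath : p.IsPath := treePath_isPath hG u v
  have hq : treePath hG u' v = p.dropUntil u' hu'mem :=
    treePath_eq hG _ (hppath.dropUntil _)
  set q := p.dropUntil u' hu'mem with hqdef
  have hexq : ∃ x ∈ q.reverse.support, x ∈ X :=
    ⟨u', by simp, hu'X⟩
  obtain ⟨v', hv'X, hv'mem, yv, hyv, hadjv⟩ := exists_sep q.reverse hv' hexq
  have hv'q : v' ∈ q.support := by
    rwa [SimpleGraph.Walk.support_reverse, List.mem_reverse] at hv'mem
  have hv'p : v' ∈ p.support := SimpleGraph.Walk.support_dropUntil_subset _ _ hv'q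
  have h1 := treeDist_add_of_mem hG w hu'mem
  have h2 : treeDist hG w u' v' + treeDist hG w v' v = treeDist hG w u' v := by
    apply treeDist_add_of_mem
    rw [hq]; exact hv'q
  exact ⟨u', v', hu'X, hv'X, hu'mem, hv'p, ⟨yu, hyu, hadju⟩, ⟨yv, hyv, hadjv⟩, by linarith⟩
end
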